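/- Let (Ω,d) and (Ω',d') be A-uniform metric spaces and let f: (Ω,d) → (Ω',d') be a map such that the induced map f: (Ω,k) → (Ω',k') between the quasihyperbolizations is H-Lipschitz for some H ≥ 0. Then there exist L = L(A,H) and λ = λ(A,H), depending only on A and H, such that f is ∂-Lipschitz with data (L,λ). -/

import Mathlib

open Metric Set Filter Topology
open scoped ENNReal Classical

noncomputable section

namespace Paper

variable {X Y : Type*}

/-- The distance function of a metric space. -/
def distFun (X : Type*) [MetricSpace X] : X → X → ℝ := fun p q => dist p q

/-- `e` is a genuine metric distance function. -/
def IsMetricDist (e : X → X → ℝ) : Prop :=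
  (∀ x, e x x = 0) ∧ (∀ x y, x ≠ y → 0 < e x y) ∧ (∀ x y, e x y = e y x) ∧
    ∀ x y z, e x z ≤ e x y + e y z

/-- Cauchy sequence with respect to the distance function `e`. -/
def CauchyWrt (e : X → X → ℝ) (u : ℕ → X) : Prop :=
  ∀ δ : ℝ, 0 < δ → ∃ N : ℕ, ∀ m, N ≤ m → ∀ n, N ≤ n → e (u m) (u n) < δ

/-- The sequence converges, w.r.t. `e`, to a point of the space. -/
def ConvWrt (e : X → X → ℝ) (u : ℕ → X) : Prop :=
  ∃ y : X, Tendsto (fun n => e (u n) y) atTop (𝓝 0)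

/-- The space is incomplete with respect to `e`:
some Cauchy sequence does not converge in the space. -/
def IncompleteWrt (e : X → X → ℝ) : Prop :=
  ∃ u : ℕ → X, CauchyWrt e u ∧ ¬ ConvWrt e u

/-- Distance from `x` to the metric boundary (the completion minus the space),
measured w.r.t. `e`: the infimum of the limits `lim_n e x (u n)` over all Cauchy
sequences `u` that have no limit in the space. -/
def bdryDistWrt (e : X → X → ℝ) (x : X) : ℝ :=
  sInf { r : ℝ | ∃ u : ℕ → X, CauchyWrt e u ∧ ¬ ConvWrt e u ∧
    Tendsto (fun n => e x (u n)) atTop (𝓝 r) }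

/-- Sequential compactness of a set w.r.t. `e`. -/
def SeqCompactWrt (e : X → X → ℝ) (s : Set X) : Prop :=
  ∀ u : ℕ → X, (∀ n, u n ∈ s) → ∃ y ∈ s, ∃ φ : ℕ → ℕ, StrictMono φ ∧
    Tendsto (fun n => e (u (φ n)) y) atTop (𝓝 0)

/-- Local compactness w.r.t. `e`: every point has arbitrarily small compact closed balls. -/
def LocallyCompactWrt (e : X → X → ℝ) : Prop :=
  ∀ x : X, ∀ r : ℝ, 0 < r → ∃ r' : ℝ, 0 < r' ∧ r' ≤ r ∧ SeqCompactWrt e { y | e x y ≤ r' }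

/-- Continuity of a curve on a set of parameters, w.r.t. `e`. -/
def ContinuousOnWrt (e : X → X → ℝ) (γ : ℝ → X) (I : Set ℝ) : Prop :=
  ∀ t ∈ I, ∀ δ : ℝ, 0 < δ → ∃ η : ℝ, 0 < η ∧ ∀ s ∈ I, |s - t| < η → e (γ s) (γ t) < δ

/-- The length (total variation) of the curve `γ` on the parameter set `I`, w.r.t. `e`. -/
def varOn (e : X → X → ℝ) (γ : ℝ → X) (I : Set ℝ) : ℝ≥0∞ :=
  ⨆ p : ℕ × { u : ℕ → ℝ // Monotone u ∧ ∀ i, u i ∈ I },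
    ∑ i ∈ Finset.range p.1, ENNReal.ofReal (e (γ (p.2.1 (i + 1))) (γ (p.2.1 i)))

/-- `X` with distance `e` is an `A`-uniform metric space: it is a locally compact,
incomplete metric space any two of whose points are joined by an `A`-uniform curve. -/
def IsUniformSpcWrt (e : X → X → ℝ) (A : ℝ) : Prop :=
  IsMetricDist e ∧ LocallyCompactWrt e ∧ IncompleteWrt e ∧
  ∀ x y : X, ∃ (a b : ℝ) (γ : ℝ → X), a ≤ b ∧ ContinuousOnWrt e γ (Icc a b) ∧
    γ a = x ∧ γ b = y ∧
    varOn e γ (Icc a b) ≤ ENNReal.ofReal (A * e x y) ∧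
    ∀ t ∈ Icc a b, min (varOn e γ (Icc a t)) (varOn e γ (Icc t b)) ≤
      ENNReal.ofReal (A * bdryDistWrt e (γ t))

/-- `f` is `∂`-Lipschitz with data `(L, lam)`. -/
def PartialLipschitzWrt (e : X → X → ℝ) (e' : Y → Y → ℝ) (L lam : ℝ) (f : X → Y) : Prop :=
  ∀ x y z : X, e y x < lam * bdryDistWrt e x → e z x < lam * bdryDistWrt e x →
    e' (f y) (f z) / bdryDistWrt e' (f x) ≤ L * (e y z / bdryDistWrt e x)

/-- `f` (with inverse `g`) is `∂`-biLipschitz with data `(L, lam)`. -/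
def PartialBiLipschitzWrt (e : X → X → ℝ) (e' : Y → Y → ℝ) (L lam : ℝ)
    (f : X → Y) (g : Y → X) : Prop :=
  1 ≤ L ∧ Function.LeftInverse g f ∧ Function.RightInverse g f ∧
    PartialLipschitzWrt e e' L lam f ∧ PartialLipschitzWrt e' e L lam g

/-- Cross-ratio of a quadruple of points, w.r.t. `e`. -/
def crossRatioWrt (e : X → X → ℝ) (x y z w : X) : ℝ := e x z * e y w / (e x y * e z w)

/-- `f` is `η`-quasimöbius. -/
def QuasiMobiusWrt (e : X → X → ℝ) (e' : Y → Y → ℝ) (η : ℝ → ℝ) (f : X → Y) : Prop :=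
  ∀ x y z w : X, x ≠ y → x ≠ z → x ≠ w → y ≠ z → y ≠ w → z ≠ w →
    crossRatioWrt e' (f x) (f y) (f z) (f w) ≤ η (crossRatioWrt e x y z w)

/-- `f` is `η`-quasisymmetric. -/
def QuasiSymmetricWrt (e : X → X → ℝ) (e' : Y → Y → ℝ) (η : ℝ → ℝ) (f : X → Y) : Prop :=
  ∀ x y z : X, ∀ t : ℝ, 0 ≤ t → e x y ≤ t * e x z → e' (f x) (f y) ≤ η t * e' (f x) (f z)

/-- `η` is (the restriction to `[0,∞)` of) a self-homeomorphism of `[0,∞)`: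
continuous, strictly increasing, fixing `0`, and tending to `∞`. -/
def IsControlFun (η : ℝ → ℝ) : Prop :=
  ContinuousOn η (Ici 0) ∧ StrictMonoOn η (Ici 0) ∧ η 0 = 0 ∧ Tendsto η atTop atTop

/-- The conformal deformation distance with conformal factor `ρ`: the infimum of
`∫ ρ ∘ γ` over all `1`-Lipschitz (w.r.t. `e`) curves joining `x` to `y`
(equivalently, the infimum of `∫_γ ρ ds` over all rectifiable curves joining `x` to `y`). -/
def confDistWrt (e : X → X → ℝ) (ρ : X → ℝ) (x y : X) : ℝ :=
  sInf { l : ℝ | ∃ (T : ℝ) (γ : ℝ → X), 0 ≤ T ∧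
    (∀ s ∈ Icc 0 T, ∀ t ∈ Icc 0 T, e (γ s) (γ t) ≤ |s - t|) ∧
    γ 0 = x ∧ γ T = y ∧ l = ∫ t in (0:ℝ)..T, ρ (γ t) }

/-- The quasihyperbolic metric of the space with distance `e`. -/
def quasiHypWrt (e : X → X → ℝ) : X → X → ℝ :=
  confDistWrt e fun z => (bdryDistWrt e z)⁻¹

/-- `γ` is a geodesic segment from `x` to `y`, parametrized by arclength on `[0, e x y]`. -/
def IsGeodesicSegWrt (e : X → X → ℝ) (γ : ℝ → X) (x y : X) : Prop :=
  γ 0 = x ∧ γ (e x y) = y ∧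
    ∀ s ∈ Icc 0 (e x y), ∀ t ∈ Icc 0 (e x y), e (γ s) (γ t) = |s - t|

/-- Any two points are joined by a geodesic. -/
def GeodesicSpaceWrt (e : X → X → ℝ) : Prop := ∀ x y : X, ∃ γ : ℝ → X, IsGeodesicSegWrt e γ x y

/-- The image of a geodesic segment. -/
def segImageWrt (e : X → X → ℝ) (γ : ℝ → X) (x y : X) : Set X := γ '' Icc 0 (e x y)

/-- `δ`-hyperbolicity: every geodesic triangle is `δ`-thin. -/
def DeltaHyperbolicWrt (e : X → X → ℝ) (δ : ℝ) : Prop :=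
  ∀ (x y z : X) (γ₁ γ₂ γ₃ : ℝ → X),
    IsGeodesicSegWrt e γ₁ x y → IsGeodesicSegWrt e γ₂ y z → IsGeodesicSegWrt e γ₃ z x →
    (∀ p ∈ segImageWrt e γ₁ x y, ∃ q ∈ segImageWrt e γ₂ y z ∪ segImageWrt e γ₃ z x, e p q ≤ δ) ∧
    (∀ p ∈ segImageWrt e γ₂ y z, ∃ q ∈ segImageWrt e γ₁ x y ∪ segImageWrt e γ₃ z x, e p q ≤ δ) ∧
    (∀ p ∈ segImageWrt e γ₃ z x, ∃ q ∈ segImageWrt e γ₁ x y ∪ segImageWrt e γ₂ y z, e p q ≤ δ)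

/-- `γ` is a geodesic ray (defined on `[0,∞)`). -/
def IsGeodesicRayWrt (e : X → X → ℝ) (γ : ℝ → X) : Prop :=
  ∀ s ∈ Ici (0:ℝ), ∀ t ∈ Ici (0:ℝ), e (γ s) (γ t) = |s - t|

/-- `γ` is a geodesic line. -/
def IsGeodesicLineWrt (e : X → X → ℝ) (γ : ℝ → X) : Prop :=
  ∀ s t : ℝ, e (γ s) (γ t) = |s - t|

/-- Two rays are at bounded distance from each other (represent the same
point of the Gromov boundary). -/
def RayEquivWrt (e : X → X → ℝ) (γ σ : ℝ → X) : Prop :=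
  ∃ c : ℝ, ∀ t ∈ Ici (0:ℝ), e (γ t) (σ t) ≤ c

/-- The infimal distance from `x` to the set `s`, w.r.t. `e`. -/
def infDistWrt (e : X → X → ℝ) (x : X) (s : Set X) : ℝ := sInf (e x '' s)

/-- `X` is `K`-roughly starlike from the point `z`. -/
def RoughStarlikeFromPointWrt (e : X → X → ℝ) (K : ℝ) (z : X) : Prop :=
  ∀ x : X, ∃ γ : ℝ → X, IsGeodesicRayWrt e γ ∧ γ 0 = z ∧ infDistWrt e x (γ '' Ici 0) ≤ K

/-- `X` is `K`-roughly starlike from the Gromov boundary point represented by the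
geodesic ray `ρ`: every point lies within distance `K` of a geodesic line starting
from that boundary point. -/
def RoughStarlikeFromRayWrt (e : X → X → ℝ) (K : ℝ) (ρ : ℝ → X) : Prop :=
  ∀ x : X, ∃ γ : ℝ → X, IsGeodesicLineWrt e γ ∧ RayEquivWrt e (fun t => γ (-t)) ρ ∧
    infDistWrt e x (range γ) ≤ K

/-- The Busemann function of the geodesic ray `ρ`:
`b_ρ(x) = lim_{t→∞} (e (ρ t) x - t) = inf_{t ≥ 0} (e (ρ t) x - t)`. -/
def busemannWrt (e : X → X → ℝ) (ρ : ℝ → X) (x : X) : ℝ :=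
  sInf ((fun t => e (ρ t) x - t) '' Ici 0)

/-- `b ∈ 𝔅̂(X)` (either a translated distance function or a translated Busemann
function), and `X` is `K`-roughly starlike from the basepoint of `b`. -/
def BhatStarlike (e : X → X → ℝ) (K : ℝ) (b : X → ℝ) : Prop :=
  (∃ (z : X) (s : ℝ), (∀ x, b x = e x z + s) ∧ RoughStarlikeFromPointWrt e K z) ∨
  (∃ (ρ : ℝ → X) (s : ℝ), IsGeodesicRayWrt e ρ ∧ (∀ x, b x = busemannWrt e ρ x + s) ∧
    RoughStarlikeFromRayWrt e K ρ)

/-- `ρ` is a Gehring–Hayman density with constant `M`: the `ρ`-length of any geodesic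
is at most `M` times the conformal distance between its endpoints. -/
def IsGHDensityWrt (e : X → X → ℝ) (M : ℝ) (ρ : X → ℝ) : Prop :=
  ∀ (x y : X) (γ : ℝ → X), IsGeodesicSegWrt e γ x y →
    (∫ t in (0:ℝ)..(e x y), ρ (γ t)) ≤ M * confDistWrt e ρ x y

/-- The density `ρ_{ε,b}(x) = e^{-ε b(x)}`. -/
def uniformizationDensity (b : X → ℝ) (ε : ℝ) : X → ℝ := fun x => Real.exp (-ε * b x)

/-- The Gromov product of `x` and `y` based at `z`. -/
def gromovProdWrt (e : X → X → ℝ) (z x y : X) : ℝ := (e x z + e y z - e x y) / 2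

/-- The sequence `u` represents the Gromov boundary point of the geodesic ray `ρ`
(with respect to the basepoint `z`). -/
def SeqRepWrt (e : X → X → ℝ) (z : X) (ρ : ℝ → X) (u : ℕ → X) : Prop :=
  Tendsto (fun n => gromovProdWrt e z (u n) (ρ n)) atTop atTop

/-- The Gromov product, based at `z`, of the two boundary points represented by the
geodesic rays `ρ` and `σ` (valued in `[0,∞]`). -/
def bGromovProdWrt (e : X → X → ℝ) (z : X) (ρ σ : ℝ → X) : ℝ≥0∞ :=
  ⨅ (u : { u : ℕ → X // SeqRepWrt e z ρ u }) (v : { v : ℕ → X // SeqRepWrt e z σ v }),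
    Filter.liminf (fun n => ENNReal.ofReal (gromovProdWrt e z (u.1 n) (v.1 n))) atTop

/-- `S(x) = sup_{ω ∈ ∂X} inf_{ξ ∈ ∂X} (ω|ξ)_x`. -/
def Sfun (e : X → X → ℝ) (x : X) : ℝ≥0∞ :=
  ⨆ (ω : { ρ : ℝ → X // IsGeodesicRayWrt e ρ }),
    ⨅ (ξ : { ρ : ℝ → X // IsGeodesicRayWrt e ρ }), bGromovProdWrt e x ω.1 ξ.1

/-- The filter at the left end of the interval `I`. -/
def leftEndFilter (I : Set ℝ) : Filter ℝ :=
  if BddBelow I then 𝓝[I] (sInf I) else atBot ⊓ 𝓟 I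

/-- The filter at the right end of the interval `I`. -/
def rightEndFilter (I : Set ℝ) : Filter ℝ :=
  if BddAbove I then 𝓝[I] (sSup I) else atTop ⊓ 𝓟 I

/-- `γ : I → Ω` is an `A`-uniform curve: it is rectifiable with endpoints
`γ₋, γ₊` in the completion `Ω̄` satisfying `ℓ(γ) ≤ A d(γ₋,γ₊)` (or non-rectifiable with
`d(γ(s),γ(t)) → ∞` towards the endpoints of `I`), and at every time `t` the shorter of
the two subcurves has length at most `A d_Ω(γ(t))`. -/
def IsUniformCurve {Ω : Type*} [MetricSpace Ω] (A : ℝ) (γ : ℝ → Ω) (I : Set ℝ) : Prop :=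
  I.Nonempty ∧ I.OrdConnected ∧ ContinuousOn γ I ∧
  ((varOn (distFun Ω) γ I ≠ ⊤ ∧
     ∃ gm gp : UniformSpace.Completion Ω,
       Tendsto (fun t => (γ t : UniformSpace.Completion Ω)) (leftEndFilter I) (𝓝 gm) ∧
       Tendsto (fun t => (γ t : UniformSpace.Completion Ω)) (rightEndFilter I) (𝓝 gp) ∧
       varOn (distFun Ω) γ I ≤ ENNReal.ofReal (A * dist gm gp)) ∨
   (varOn (distFun Ω) γ I = ⊤ ∧
     Tendsto (fun pq : ℝ × ℝ => dist (γ pq.1) (γ pq.2))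
       (leftEndFilter I ×ˢ rightEndFilter I) atTop)) ∧
  ∀ t ∈ I, min (varOn (distFun Ω) γ (I ∩ Iic t)) (varOn (distFun Ω) γ (I ∩ Ici t)) ≤
    ENNReal.ofReal (A * bdryDistWrt (distFun Ω) (γ t))

/-! Around `x`, at the scale `λ d_Ω(x)` with `λ = 1 / (4 (A + 1))`, the quasihyperbolic metric of an
`A`-uniform space is comparable to `d(y, z) / d_Ω(x)`. Since `d_Ω` is `1`-Lipschitz, it grows at
most linearly along a path, which gives `k(x, y) ≥ log (1 + d(x, y) / d_Ω(x))`. Conversely, an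
`A`-uniform curve from `y` to `z`, reparametrized by arclength, stays where `d_Ω ≥ d_Ω(x) / 2`, so
`k(y, z) ≤ 2 A d(y, z) / d_Ω(x) ≤ 1`. Hence `k'(f x, f y) ≤ H` and
`k'(f y, f z) ≤ 2 A H d(y, z) / d_Ω(x)`, and inverting the logarithmic lower bound in `Ω'` gives
`d'(f y, f z) ≤ (e^{k'(f y, f z)} - 1) d'(f y)` and `d'(f y) ≤ e^H d'(f x)`; thus
`L = 2 A H e^{2H}` works. -/

section VariationOnFromTo

variable {E : Type*} [PseudoMetricSpace E]

theorem continuousOn_variationOnFromTo {f : ℝ → E} {s : Set ℝ} {a : ℝ}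
    (hf : LocallyBoundedVariationOn f s) (hfc : ContinuousOn f s) (ha : a ∈ s) :
    ContinuousOn (variationOnFromTo f s a) s := by
  intro b hb
  have hleft : ContinuousWithinAt (variationOnFromTo f s a) (s ∩ Iio b) b := by
    simpa [ContinuousWithinAt] using
      variationOnFromTo.tendsto_left ha hb hf ((hfc b hb).mono inter_subset_left)
  have hright : ContinuousWithinAt (variationOnFromTo f s a) (s ∩ Ioi b) b := by
    simpa [ContinuousWithinAt] using
      variationOnFromTo.tendsto_right ha hb hf ((hfc b hb).mono inter_subset_left)
  have hs : s ⊆ (s ∩ Iio b ∪ s ∩ Ioi b) ∪ {b} := fun t ht => by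
    rcases lt_trichotomy t b with h | rfl | h
    exacts [Or.inl (Or.inl ⟨ht, h⟩), Or.inr rfl, Or.inl (Or.inr ⟨ht, h⟩)]
  exact ((hleft.union hright).union continuousWithinAt_singleton).mono hs

theorem HasUnitSpeedOn.dist_le {f : ℝ → E} {s : Set ℝ} (hf : HasUnitSpeedOn f s)
    {x y : ℝ} (hx : x ∈ s) (hy : y ∈ s) : dist (f x) (f y) ≤ |x - y| := by
  wlog hxy : x ≤ y generalizing x y
  · rw [dist_comm, abs_sub_comm]
    exact this hy hx (le_of_not_ge hxy)
  have hvar := hf hx hy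
  rw [NNReal.coe_one, one_mul] at hvar
  have h := eVariationOn.edist_le f (s := s ∩ Icc x y) ⟨hx, le_rfl, hxy⟩ ⟨hy, hxy, le_rfl⟩
  rw [hvar, edist_dist, ENNReal.ofReal_le_ofReal_iff (sub_nonneg.2 hxy)] at h
  rwa [abs_sub_comm, abs_of_nonneg (sub_nonneg.2 hxy)]

end VariationOnFromTo

theorem exists_reparam_dist_le {E : Type*} [MetricSpace E] {γ : ℝ → E} {a b : ℝ} (hab : a ≤ b)
    (hγ : ContinuousOn γ (Icc a b)) (hfin : eVariationOn γ (Icc a b) ≠ ⊤) :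
    ∃ ψ : ℝ → E, ψ 0 = γ a ∧ ψ (eVariationOn γ (Icc a b)).toReal = γ b ∧
      ∀ s ∈ Icc 0 (eVariationOn γ (Icc a b)).toReal,
        ∀ t ∈ Icc 0 (eVariationOn γ (Icc a b)).toReal, dist (ψ s) (ψ t) ≤ |s - t| := by
  have hbv : LocallyBoundedVariationOn γ (Icc a b) := fun _ _ _ _ =>
    ne_top_of_le_ne_top hfin (eVariationOn.mono γ inter_subset_left)
  have ha : a ∈ Icc a b := left_mem_Icc.2 hab
  have hb : b ∈ Icc a b := right_mem_Icc.2 hab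
  let v := variationOnFromTo γ (Icc a b) a
  have hva : v a = 0 := variationOnFromTo.self γ _ a
  have hvb : v b = (eVariationOn γ (Icc a b)).toReal := by
    change variationOnFromTo γ (Icc a b) a b = _
    rw [variationOnFromTo.eq_of_le γ _ hab, inter_self]
  have himage : v '' Icc a b = Icc 0 (eVariationOn γ (Icc a b)).toReal := by
    rw [← hva, ← hvb]
    exact (continuousOn_variationOnFromTo hbv hγ ha).image_Icc_of_monotoneOn hab
      (variationOnFromTo.monotoneOn hbv ha)
  have hends : ∀ t ∈ Icc a b, naturalParameterization γ (Icc a b) a (v t) = γ t := fun t ht =>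
    edist_eq_zero.1 (edist_naturalParameterization_eq_zero hbv ha ht)
  refine ⟨naturalParameterization γ (Icc a b) a, ?_, ?_, ?_⟩
  · rw [← hva, hends a ha]
  · rw [← hvb, hends b hb]
  · rw [← himage]
    exact fun s hs t ht =>
      HasUnitSpeedOn.dist_le (has_unit_speed_naturalParameterization γ hbv ha) hs ht

theorem exp_sub_one_le_mul_exp (s : ℝ) : Real.exp s - 1 ≤ s * Real.exp s := by
  have h := mul_le_mul_of_nonneg_right (Real.add_one_le_exp (-s)) (Real.exp_pos s).le
  rw [← Real.exp_add, neg_add_cancel, Real.exp_zero] at h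
  linarith

def IsLipPathWrt (e : X → X → ℝ) (γ : ℝ → X) (T : ℝ) (x y : X) : Prop :=
  0 ≤ T ∧ (∀ s ∈ Icc 0 T, ∀ t ∈ Icc 0 T, e (γ s) (γ t) ≤ |s - t|) ∧ γ 0 = x ∧ γ T = y

section ConfDist

variable {e : X → X → ℝ} {ρ : X → ℝ} {x y : X}

theorem confDistWrt_le_integral (hρ : ∀ z, 0 ≤ ρ z) {γ : ℝ → X} {T : ℝ}
    (hγ : IsLipPathWrt e γ T x y) : confDistWrt e ρ x y ≤ ∫ t in (0:ℝ)..T, ρ (γ t) := by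
  refine csInf_le ⟨0, ?_⟩ ⟨T, γ, hγ.1, hγ.2.1, hγ.2.2.1, hγ.2.2.2, rfl⟩
  rintro _ ⟨T, γ, hT, -, -, -, rfl⟩
  exact intervalIntegral.integral_nonneg hT fun t _ => hρ _

theorem le_confDistWrt {c : ℝ} (hne : ∃ T γ, IsLipPathWrt e γ T x y)
    (h : ∀ T γ, IsLipPathWrt e γ T x y → c ≤ ∫ t in (0:ℝ)..T, ρ (γ t)) :
    c ≤ confDistWrt e ρ x y := by
  obtain ⟨T, γ, hT, hlip, h0, h1⟩ := hne
  refine le_csInf ⟨_, T, γ, hT, hlip, h0, h1, rfl⟩ ?_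
  rintro _ ⟨T, γ, hT, hlip, h0, h1, rfl⟩
  exact h T γ ⟨hT, hlip, h0, h1⟩

end ConfDist

section MetricSpace

variable {Ω : Type*} [MetricSpace Ω]

theorem varOn_distFun (γ : ℝ → Ω) (I : Set ℝ) : varOn (distFun Ω) γ I = eVariationOn γ I := by
  unfold varOn eVariationOn
  congr 1; funext p; congr 1; funext i
  rw [distFun, edist_dist]

theorem ContinuousOnWrt.continuousOn {γ : ℝ → Ω} {I : Set ℝ}
    (h : ContinuousOnWrt (distFun Ω) γ I) : ContinuousOn γ I :=
  Metric.continuousOn_iff.2 fun t ht ε hε =>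
    let ⟨η, hη, H⟩ := h t ht ε hε
    ⟨η, hη, fun s hs hst => H s hs (by rwa [Real.dist_eq] at hst)⟩

theorem IsLipPathWrt.dist_le {γ : ℝ → Ω} {T : ℝ} {x y : Ω}
    (hγ : IsLipPathWrt (distFun Ω) γ T x y) {s t : ℝ} (hs : s ∈ Icc 0 T) (ht : t ∈ Icc 0 T) :
    dist (γ s) (γ t) ≤ |s - t| :=
  hγ.2.1 s hs t ht

theorem IsLipPathWrt.continuousOn {γ : ℝ → Ω} {T : ℝ} {x y : Ω}
    (hγ : IsLipPathWrt (distFun Ω) γ T x y) : ContinuousOn γ (Icc 0 T) :=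
  (LipschitzOnWith.of_dist_le_mul (K := 1) fun s hs t ht => by
    rw [NNReal.coe_one, one_mul, Real.dist_eq]; exact hγ.dist_le hs ht).continuousOn

theorem cauchyWrt_distFun_iff {u : ℕ → Ω} : CauchyWrt (distFun Ω) u ↔ CauchySeq u := by
  rw [Metric.cauchySeq_iff]; rfl

theorem convWrt_distFun_iff {u : ℕ → Ω} :
    ConvWrt (distFun Ω) u ↔ ∃ y, Tendsto u atTop (𝓝 y) := by
  simp only [ConvWrt, distFun, ← tendsto_iff_dist_tendsto_zero]

theorem seqCompactWrt_distFun_iff {s : Set Ω} : SeqCompactWrt (distFun Ω) s ↔ IsSeqCompact s := by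
  simp only [SeqCompactWrt, IsSeqCompact, distFun, ← tendsto_iff_dist_tendsto_zero]; rfl

def bdryDistSet (x : Ω) : Set ℝ :=
  { r | ∃ u : ℕ → Ω, CauchySeq u ∧ (¬∃ y, Tendsto u atTop (𝓝 y)) ∧
    Tendsto (fun n => dist x (u n)) atTop (𝓝 r) }

theorem bdryDistWrt_distFun_eq (x : Ω) : bdryDistWrt (distFun Ω) x = sInf (bdryDistSet x) := by
  simp only [bdryDistWrt, bdryDistSet, cauchyWrt_distFun_iff, convWrt_distFun_iff]; rfl

theorem exists_tendsto_dist_of_cauchySeq {u : ℕ → Ω} (hu : CauchySeq u) (x : Ω) :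
    ∃ r, Tendsto (fun n => dist x (u n)) atTop (𝓝 r) :=
  cauchySeq_tendsto_of_complete ((LipschitzWith.dist_right x).uniformContinuous.comp_cauchySeq hu)

theorem bdryDistSet_nonempty (hinc : IncompleteWrt (distFun Ω)) (x : Ω) :
    (bdryDistSet x).Nonempty := by
  obtain ⟨u, hu, hnc⟩ := hinc
  rw [cauchyWrt_distFun_iff] at hu
  rw [convWrt_distFun_iff] at hnc
  obtain ⟨r, hr⟩ := exists_tendsto_dist_of_cauchySeq hu x
  exact ⟨r, u, hu, hnc, hr⟩

theorem nonneg_of_mem_bdryDistSet {x : Ω} {r : ℝ} (hr : r ∈ bdryDistSet x) : 0 ≤ r := by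
  obtain ⟨u, -, -, hu⟩ := hr
  exact ge_of_tendsto' hu fun n => dist_nonneg

theorem bdryDistWrt_le_add_dist (hinc : IncompleteWrt (distFun Ω)) (x y : Ω) :
    bdryDistWrt (distFun Ω) x ≤ bdryDistWrt (distFun Ω) y + dist x y := by
  rw [bdryDistWrt_distFun_eq, bdryDistWrt_distFun_eq, ← sub_le_iff_le_add]
  refine le_csInf (bdryDistSet_nonempty hinc y) ?_
  rintro s ⟨u, hu, hnc, hs⟩
  obtain ⟨r, hr⟩ := exists_tendsto_dist_of_cauchySeq hu x
  have hxr : sInf (bdryDistSet x) ≤ r :=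
    csInf_le ⟨0, fun _ => nonneg_of_mem_bdryDistSet⟩ ⟨u, hu, hnc, hr⟩
  have hrs : r ≤ s + dist x y :=
    le_of_tendsto_of_tendsto' hr (hs.add_const _) fun n => by
      linarith [dist_triangle x y (u n)]
  linarith

theorem bdryDistWrt_pos (hloc : LocallyCompactWrt (distFun Ω)) (hinc : IncompleteWrt (distFun Ω))
    (x : Ω) : 0 < bdryDistWrt (distFun Ω) x := by
  obtain ⟨r, hr, -, hcpt⟩ := hloc x 1 one_pos
  rw [seqCompactWrt_distFun_iff] at hcpt
  rw [bdryDistWrt_distFun_eq]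
  refine hr.trans_le (le_csInf (bdryDistSet_nonempty hinc x) ?_)
  rintro s ⟨u, hu, hnc, hs⟩
  by_contra! hsr
  -- a Cauchy sequence visiting a compact set infinitely often converges
  have hfreq : ∃ᶠ n in atTop, u n ∈ {y | distFun Ω x y ≤ r} :=
    ((hs.eventually (gt_mem_nhds hsr)).mono fun n hn => le_of_lt hn).frequently
  obtain ⟨y, -, φ, hφ, hy⟩ := hcpt.subseq_of_frequently_in hfreq
  exact hnc ⟨y, tendsto_nhds_of_cauchySeq_of_subseq hu hφ.tendsto_atTop hy⟩

end MetricSpace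

section QuasiHyperbolic

variable {Ω : Type*} [MetricSpace Ω]
variable (hinc : IncompleteWrt (distFun Ω)) (hpos : ∀ w : Ω, 0 < bdryDistWrt (distFun Ω) w)
include hinc hpos

theorem intervalIntegrable_inv_bdryDistWrt {γ : ℝ → Ω} {T : ℝ} {x y : Ω}
    (hγ : IsLipPathWrt (distFun Ω) γ T x y) :
    IntervalIntegrable (fun t => (bdryDistWrt (distFun Ω) (γ t))⁻¹) MeasureTheory.volume 0 T := by
  refine ContinuousOn.intervalIntegrable ?_
  rw [uIcc_of_le hγ.1]
  exact ((LipschitzWith.of_le_add (bdryDistWrt_le_add_dist hinc)).continuous.comp_continuousOn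
    hγ.continuousOn).inv₀ fun t _ => (hpos _).ne'

theorem log_one_add_div_le_integral {γ : ℝ → Ω} {T : ℝ} {x y : Ω}
    (hγ : IsLipPathWrt (distFun Ω) γ T x y) :
    Real.log (1 + dist x y / bdryDistWrt (distFun Ω) x) ≤
      ∫ t in (0:ℝ)..T, (bdryDistWrt (distFun Ω) (γ t))⁻¹ := by
  obtain ⟨hT, -, hγ0, hγT⟩ := id hγ
  set d := bdryDistWrt (distFun Ω) x
  have hd := hpos x
  have hxy : dist x y ≤ T := by
    simpa [← hγ0, ← hγT, abs_of_nonneg hT] using hγ.dist_le ⟨le_rfl, hT⟩ ⟨hT, le_rfl⟩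
  have hbound : ∀ t ∈ Icc 0 T, bdryDistWrt (distFun Ω) (γ t) ≤ d + t := fun t ht => by
    have h := hγ.dist_le ht ⟨le_rfl, hT⟩
    rw [hγ0, sub_zero, abs_of_nonneg ht.1] at h
    linarith [bdryDistWrt_le_add_dist hinc (γ t) x]
  have hint : ∫ t in (0:ℝ)..T, (d + t)⁻¹ = Real.log ((d + T) / d) := by
    rw [intervalIntegral.integral_comp_add_left (fun t => t⁻¹), add_zero,
      integral_inv_of_pos hd (by linarith)]
  calc Real.log (1 + dist x y / d) ≤ Real.log ((d + T) / d) := by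
        gcongr
        rw [add_div, div_self hd.ne']
        gcongr
    _ = ∫ t in (0:ℝ)..T, (d + t)⁻¹ := hint.symm
    _ ≤ ∫ t in (0:ℝ)..T, (bdryDistWrt (distFun Ω) (γ t))⁻¹ := by
        refine intervalIntegral.integral_mono_on hT ?_
          (intervalIntegrable_inv_bdryDistWrt hinc hpos hγ)
          fun t ht => inv_anti₀ (hpos _) (hbound t ht)
        refine ContinuousOn.intervalIntegrable ?_
        rw [uIcc_of_le hT]
        exact ContinuousOn.inv₀ (f := fun t => d + t) (by fun_prop) fun t ht =>
          (by linarith [ht.1] : 0 < d + t).ne'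

end QuasiHyperbolic

namespace IsUniformSpcWrt

variable {Ω : Type*} [MetricSpace Ω] {A : ℝ}

theorem incompleteWrt (hU : IsUniformSpcWrt (distFun Ω) A) : IncompleteWrt (distFun Ω) :=
  hU.2.2.1

theorem bdryDistWrt_pos (hU : IsUniformSpcWrt (distFun Ω) A) (x : Ω) :
    0 < bdryDistWrt (distFun Ω) x :=
  Paper.bdryDistWrt_pos hU.2.1 hU.incompleteWrt x

theorem exists_lipPath (hU : IsUniformSpcWrt (distFun Ω) A) (hA : 0 ≤ A)
    (y z : Ω) : ∃ T ψ, IsLipPathWrt (distFun Ω) ψ T y z ∧ T ≤ A * dist y z := by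
  obtain ⟨a, b, γ, hab, hγ, rfl, rfl, hlen, -⟩ := hU.2.2.2 y z
  rw [varOn_distFun] at hlen
  obtain ⟨ψ, hψa, hψb, hψ⟩ :=
    exists_reparam_dist_le hab hγ.continuousOn (ne_top_of_le_ne_top ENNReal.ofReal_ne_top hlen)
  exact ⟨_, ψ, ⟨ENNReal.toReal_nonneg, hψ, hψa, hψb⟩,
    ENNReal.toReal_le_of_le_ofReal (mul_nonneg hA dist_nonneg) hlen⟩

variable (hU : IsUniformSpcWrt (distFun Ω) A) (hA : 0 ≤ A)
include hU hA

theorem quasiHypWrt_le {x y z : Ω}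
    (h : dist x y + A * dist y z ≤ bdryDistWrt (distFun Ω) x / 2) :
    quasiHypWrt (distFun Ω) y z ≤ 2 * A * dist y z / bdryDistWrt (distFun Ω) x := by
  obtain ⟨T, ψ, hψ, hTle⟩ := hU.exists_lipPath hA y z
  set d := bdryDistWrt (distFun Ω) x
  have hd : 0 < d := hU.bdryDistWrt_pos x
  have hfar : ∀ t ∈ Icc 0 T, d / 2 ≤ bdryDistWrt (distFun Ω) (ψ t) := fun t ht => by
    have h0 := hψ.dist_le ⟨le_rfl, hψ.1⟩ ht
    rw [hψ.2.2.1, zero_sub, abs_neg, abs_of_nonneg ht.1] at h0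
    linarith [bdryDistWrt_le_add_dist hU.incompleteWrt x (ψ t), dist_triangle x y (ψ t), ht.2]
  calc quasiHypWrt (distFun Ω) y z ≤ ∫ t in (0:ℝ)..T, (bdryDistWrt (distFun Ω) (ψ t))⁻¹ :=
        confDistWrt_le_integral (fun w => inv_nonneg.2 (hU.bdryDistWrt_pos w).le) hψ
    _ ≤ ∫ _ in (0:ℝ)..T, (d / 2)⁻¹ :=
        intervalIntegral.integral_mono_on hψ.1
          (intervalIntegrable_inv_bdryDistWrt hU.incompleteWrt hU.bdryDistWrt_pos hψ)
          intervalIntegrable_const fun t ht => inv_anti₀ (by positivity) (hfar t ht)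
    _ = 2 * T / d := by rw [intervalIntegral.integral_const, smul_eq_mul]; field_simp; ring
    _ ≤ 2 * A * dist y z / d := div_le_div_of_nonneg_right (by linarith) hd.le

theorem dist_le_exp_quasiHypWrt_sub_one_mul (x y : Ω) :
    dist x y ≤ (Real.exp (quasiHypWrt (distFun Ω) x y) - 1) * bdryDistWrt (distFun Ω) x := by
  have hpos := hU.bdryDistWrt_pos
  have hlog : Real.log (1 + dist x y / bdryDistWrt (distFun Ω) x) ≤ quasiHypWrt (distFun Ω) x y :=
    le_confDistWrt (let ⟨T, ψ, hψ, _⟩ := hU.exists_lipPath hA x y; ⟨T, ψ, hψ⟩)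
      fun _ _ hγ => log_one_add_div_le_integral hU.incompleteWrt hpos hγ
  rw [Real.log_le_iff_le_exp (by have := hpos x; positivity)] at hlog
  exact (div_le_iff₀ (hpos x)).1 (by linarith)

theorem bdryDistWrt_le_exp_quasiHypWrt_mul (x y : Ω) :
    bdryDistWrt (distFun Ω) y ≤
      Real.exp (quasiHypWrt (distFun Ω) x y) * bdryDistWrt (distFun Ω) x := by
  linarith [bdryDistWrt_le_add_dist hU.incompleteWrt y x, dist_comm y x,
    hU.dist_le_exp_quasiHypWrt_sub_one_mul hA x y]

theorem quasiHypWrt_le_of_dist_lt {x y z : Ω}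
    (hy : dist y x < 1 / (4 * (A + 1)) * bdryDistWrt (distFun Ω) x)
    (hz : dist z x < 1 / (4 * (A + 1)) * bdryDistWrt (distFun Ω) x) :
    quasiHypWrt (distFun Ω) y z ≤ 2 * A * dist y z / bdryDistWrt (distFun Ω) x ∧
      2 * A * dist y z / bdryDistWrt (distFun Ω) x ≤ 1 := by
  set d := bdryDistWrt (distFun Ω) x
  have hd : 0 < d := hU.bdryDistWrt_pos x
  set c := 1 / (4 * (A + 1)) * d
  have hc : 4 * (A + 1) * c = d := by simp only [c]; field_simp
  have hc0 : 0 ≤ c := by positivity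
  have hyz : A * dist y z ≤ A * (2 * c) :=
    mul_le_mul_of_nonneg_left (by linarith [dist_triangle_right y z x]) hA
  refine ⟨hU.quasiHypWrt_le hA ?_, (div_le_one hd).2 ?_⟩ <;> nlinarith [dist_comm x y]

theorem dist_le_of_quasiHypWrt_le {x y z : Ω} {κ H : ℝ} (hxy : quasiHypWrt (distFun Ω) x y ≤ H)
    (hyz : quasiHypWrt (distFun Ω) y z ≤ κ) (hκ : 0 ≤ κ) (hκH : κ ≤ H) :
    dist y z ≤ κ * Real.exp (2 * H) * bdryDistWrt (distFun Ω) x := by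
  have hpos := hU.bdryDistWrt_pos
  have hexp : Real.exp (quasiHypWrt (distFun Ω) y z) - 1 ≤ κ * Real.exp H :=
    calc Real.exp (quasiHypWrt (distFun Ω) y z) - 1 ≤ Real.exp κ - 1 := by gcongr
      _ ≤ κ * Real.exp κ := exp_sub_one_le_mul_exp κ
      _ ≤ κ * Real.exp H := by gcongr
  have hbdry : bdryDistWrt (distFun Ω) y ≤ Real.exp H * bdryDistWrt (distFun Ω) x :=
    (hU.bdryDistWrt_le_exp_quasiHypWrt_mul hA x y).trans (by gcongr; exact (hpos x).le)
  calc dist y z ≤ (Real.exp (quasiHypWrt (distFun Ω) y z) - 1) * bdryDistWrt (distFun Ω) y :=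
        hU.dist_le_exp_quasiHypWrt_sub_one_mul hA y z
    _ ≤ κ * Real.exp H * (Real.exp H * bdryDistWrt (distFun Ω) x) :=
        mul_le_mul hexp hbdry (hpos y).le (by positivity)
    _ = κ * Real.exp (2 * H) * bdryDistWrt (distFun Ω) x := by rw [two_mul, Real.exp_add]; ring

end IsUniformSpcWrt

/-- If the map induced by `f` between the quasihyperbolizations of two
`A`-uniform metric spaces is `H`-Lipschitz, then `f` is `∂`-Lipschitz with data `(L, λ)`
depending only on `A` and `H`. -/
theorem statement2 (A H : ℝ) (hA : 1 ≤ A) (hH : 0 ≤ H) :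
    ∃ L lam : ℝ, 0 ≤ L ∧ 0 < lam ∧ lam < 1 ∧
      ∀ (Ω Ω' : Type*) [MetricSpace Ω] [MetricSpace Ω'] (f : Ω → Ω'),
        IsUniformSpcWrt (distFun Ω) A →
        IsUniformSpcWrt (distFun Ω') A →
        (∀ x y : Ω, quasiHypWrt (distFun Ω') (f x) (f y) ≤ H * quasiHypWrt (distFun Ω) x y) →
        PartialLipschitzWrt (distFun Ω) (distFun Ω') L lam f := by
  have hA0 : 0 ≤ A := zero_le_one.trans hA
  refine ⟨2 * A * H * Real.exp (2 * H), 1 / (4 * (A + 1)), by positivity, by positivity,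
    (div_lt_one (by linarith)).2 (by linarith), ?_⟩
  intro Ω Ω' _ _ f hU hU' hf x y z hy hz
  show dist (f y) (f z) / _ ≤ _ * (dist y z / _)
  have hd := hU.bdryDistWrt_pos x
  have hx : dist x x < 1 / (4 * (A + 1)) * bdryDistWrt (distFun Ω) x := by
    rw [dist_self]; positivity
  obtain ⟨hkxy, hxy⟩ := hU.quasiHypWrt_le_of_dist_lt hA0 hx hy
  obtain ⟨hkyz, hyz⟩ := hU.quasiHypWrt_le_of_dist_lt hA0 hy hz
  have hfyz := hU'.dist_le_of_quasiHypWrt_le hA0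
    ((hf x y).trans (mul_le_of_le_one_right hH (hkxy.trans hxy)))
    ((hf y z).trans (mul_le_mul_of_nonneg_left hkyz hH))
    (mul_nonneg hH (div_nonneg (by positivity) hd.le)) (mul_le_of_le_one_right hH hyz)
  rw [div_le_iff₀ (hU'.bdryDistWrt_pos (f x))]
  exact hfyz.trans_eq (by ring)

end Paper

end
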